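/- Let G be a (bull, chair)-free graph containing an induced odd cycle Q = v_1 v_2 … v_p v_1 of length p ≥ 7 (p odd). If a vertex w ∉ Q has at least one neighbor in Q, then either w is adjacent to every vertex of Q, or there exists an index i (modulo p) such that the set of neighbors of w in Q is exactly {v_{i-1}, v_i, v_{i+1}}. -/

import Mathlib

/-!
Index the cycle by integers modulo `p` and let `S` be the set of `k` with `w` adjacent to `v k`.
Small chairs and bulls turn into local rules for `S`. If `k ∈ S` but `k ± 1 ∉ S`, the chair with
centre `v k`, leaves `w`, `v (k - 1)` and pendant path `v (k + 1), v (k + 2)` forces `k + 2 ∈ S`,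
while the chair with centre `v k`, leaves `v (k ± 1)` and pendant path `w, v t` rules out every
`t ∈ S` at cyclic distance `3, …, p - 3` from `k`. For `p ≥ 7` this is contradictory: then
`k + 2 ∈ S`, `k + 3 ∉ S`, and the first rule at `k + 2` gives `k + 4 ∈ S`.
If `k - 1, k ∈ S` but `k + 1 ∉ S`, bulls on the triangle `w, v (k - 1), v k` force `k - 2 ∈ S`
and rule out `k + 3, …, k + p - 3`. Starting from some `k ∈ S` with `k + 1 ∉ S`, these rules
leave exactly `S = {k - 2, k - 1, k}`.
-/

open SimpleGraph Finset

/-- The cycle graph on `Fin p` (for `p ≥ 3` this is the cycle `C_p`). -/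
def cycleG (p : ℕ) [NeZero p] : SimpleGraph (Fin p) where
  Adj i j := i ≠ j ∧ (i + 1 = j ∨ j + 1 = i)
  symm := by
    constructor
    rintro i j ⟨h, h'⟩
    exact ⟨h.symm, h'.symm⟩
  loopless := by
    constructor
    rintro i ⟨h, _⟩
    exact h rfl

/-- The clique expansion `C_p[k 0, …, k (p-1)]` of the cycle `C_p`:
vertices of the cycle are replaced by cliques of the prescribed sizes, and
all edges are added between cyclically consecutive cliques. -/
def cliqueExpansion (p : ℕ) [NeZero p] (k : Fin p → ℕ) : SimpleGraph (Σ i : Fin p, Fin (k i)) where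
  Adj a b := a ≠ b ∧ (a.1 = b.1 ∨ a.1 + 1 = b.1 ∨ b.1 + 1 = a.1)
  symm := by
    constructor
    rintro a b ⟨h, h'⟩
    refine ⟨h.symm, ?_⟩
    rcases h' with h' | h' | h'
    · exact Or.inl h'.symm
    · exact Or.inr (Or.inr h')
    · exact Or.inr (Or.inl h')
  loopless := by
    constructor
    rintro a ⟨h, _⟩
    exact h rfl

/-- The join `G ⊕ H` of two graphs: disjoint union plus all edges in between. -/
def joinG {α β : Type*} (G : SimpleGraph α) (H : SimpleGraph β) : SimpleGraph (α ⊕ β) where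
  Adj x y :=
    match x, y with
    | Sum.inl a, Sum.inl b => G.Adj a b
    | Sum.inr a, Sum.inr b => H.Adj a b
    | _, _ => True
  symm := by
    constructor
    rintro (a | a) (b | b) h
    · exact G.adj_symm h
    · trivial
    · trivial
    · exact H.adj_symm h
  loopless := by
    constructor
    rintro (a | a) h
    · exact G.irrefl h
    · exact H.irrefl h

/-- The bull: a triangle with two pendant edges. -/
def bull : SimpleGraph (Fin 5) :=
  SimpleGraph.fromRel (fun a b =>
    (a = 0 ∧ b = 1) ∨ (a = 1 ∧ b = 2) ∨ (a = 2 ∧ b = 3) ∨ (a = 3 ∧ b = 4) ∨ (a = 1 ∧ b = 3))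

/-- The claw `K_{1,3}`. -/
def claw : SimpleGraph (Fin 4) :=
  SimpleGraph.fromRel (fun a b => a = 0 ∧ b ≠ 0)

/-- The chair: the claw with one edge subdivided once. -/
def chair : SimpleGraph (Fin 5) :=
  SimpleGraph.fromRel (fun a b =>
    (a = 0 ∧ b = 1) ∨ (a = 0 ∧ b = 2) ∨ (a = 0 ∧ b = 3) ∨ (a = 3 ∧ b = 4))

/-- `G` contains `H` as a (not necessarily induced) subgraph. -/
def ContainsSub {V W : Type*} (G : SimpleGraph V) (H : SimpleGraph W) : Prop :=
  ∃ f : H →g G, Function.Injective f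

/-- The independence number of a finite graph. -/
noncomputable def indepNum {V : Type*} [Fintype V] (G : SimpleGraph V) : ℕ :=
  sSup {n | ∃ s : Finset V, s.card = n ∧ ∀ a ∈ s, ∀ b ∈ s, a ≠ b → ¬ G.Adj a b}

/-- Clique sizes of the spindle graph `M_{3i+1} = C_{2i+1}[2,1,2,1,…,2,1,1]`. -/
def spindleKs (i : ℕ) : Fin (2 * i + 1) → ℕ :=
  fun j => if j.val % 2 = 0 ∧ j.val < 2 * i then 2 else 1

/-- Clique sizes `[2,…,2,1,3,1,3,1,…,3,1]`: `a` copies of `2`, then a `1`,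
then alternating `3,1`-pairs up to length `p`. -/
def patternKs (p a : ℕ) : Fin p → ℕ :=
  fun j => if j.val < a then 2 else if (j.val - a) % 2 = 0 then 1 else 3

section
open Fin.CommRing
variable {p : ℕ} [NeZero p]

theorem Fin.intCast_eq_intCast_iff_of_sub_lt {a b : ℤ} (h₁ : a - b < p) (h₂ : b - a < p) :
    (a : Fin p) = b ↔ a = b := by
  rw [CharP.intCast_eq_intCast (Fin p) p, Int.modEq_iff_dvd]
  refine ⟨fun h => ?_, fun h => by simp [h]⟩
  have := Int.eq_zero_of_abs_lt_dvd h (abs_lt.2 ⟨by omega, by omega⟩)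
  omega

theorem Fin.exists_intCast_eq (j : Fin p) (a : ℤ) :
    ∃ k : ℤ, a ≤ k ∧ k < a + p ∧ (k : Fin p) = j := by
  have hp : (0 : ℤ) < p := by have := NeZero.pos p; omega
  refine ⟨a + (j.val - a) % p, by have := Int.emod_nonneg (j.val - a) hp.ne'; omega,
    by have := Int.emod_lt_of_pos (j.val - a) hp; omega, ?_⟩
  have hj : ((j.val : ℤ) : Fin p) = j := by simp
  rw [← hj, CharP.intCast_eq_intCast (Fin p) p]
  exact ((Int.mod_modEq _ _).add_left a).trans (by simp [Int.ModEq])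

theorem Fin.exists_intCast_and_not_intCast_add_one {P : Fin p → Prop} (h : ∃ i, P i)
    (h' : ∃ j, ¬P j) : ∃ k : ℤ, P k ∧ ¬P ↑(k + 1) := by
  obtain ⟨i, hi⟩ := h
  obtain ⟨j, hj⟩ := h'
  obtain ⟨a, -, -, rfl⟩ := Fin.exists_intCast_eq i 0
  obtain ⟨b, hab, -, rfl⟩ := Fin.exists_intCast_eq j a
  by_contra! hstep
  induction b, hab using Int.leInduction with
  | base => exact hj hi
  | succ b _ ih => exact ih fun hb => hj (hstep b hb)

theorem Fin.exists_forall_iff_eq_sub_one_or_eq_or_eq_add_one {P : Fin p → Prop} (hp : 3 ≤ p)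
    {k : ℤ} (h₂ : P ↑(k - 2)) (h₁ : P ↑(k - 1)) (h₀ : P k)
    (hout : ∀ t : ℤ, k + 1 ≤ t → t + 3 ≤ k + p → ¬P t) :
    ∃ c, ∀ j, P j ↔ j = c - 1 ∨ j = c ∨ j = c + 1 := by
  refine ⟨((k - 1 : ℤ) : Fin p), fun j => ?_⟩
  obtain ⟨t, ht₁, ht₂, rfl⟩ := Fin.exists_intCast_eq j (k - 2)
  rw [show ((k - 1 : ℤ) : Fin p) - 1 = ((k - 2 : ℤ) : Fin p) by push_cast; ring,
    show ((k - 1 : ℤ) : Fin p) + 1 = (k : Fin p) by push_cast; ring,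
    Fin.intCast_eq_intCast_iff_of_sub_lt (a := t) (b := k - 2) (by omega) (by omega),
    Fin.intCast_eq_intCast_iff_of_sub_lt (a := t) (b := k - 1) (by omega) (by omega),
    Fin.intCast_eq_intCast_iff_of_sub_lt (a := t) (b := k) (by omega) (by omega)]
  constructor
  · intro ht
    by_contra! hne
    exact hout t (by omega) (by omega) ht
  · rintro (rfl | rfl | rfl) <;> assumption

theorem cycleG_adj_intCast_iff {a b : ℤ} (h₁ : a - b ≤ p - 2) (h₂ : b - a ≤ p - 2) :
    (cycleG p).Adj a b ↔ a = b + 1 ∨ b = a + 1 := by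
  have hsucc (c : ℤ) : (c : Fin p) + 1 = ((c + 1 : ℤ) : Fin p) := by push_cast; rfl
  change (a : Fin p) ≠ b ∧ ((a : Fin p) + 1 = b ∨ (b : Fin p) + 1 = a) ↔ _
  rw [hsucc, hsucc, ne_eq,
    Fin.intCast_eq_intCast_iff_of_sub_lt (a := a) (b := b) (by omega) (by omega),
    Fin.intCast_eq_intCast_iff_of_sub_lt (a := a + 1) (b := b) (by omega) (by omega),
    Fin.intCast_eq_intCast_iff_of_sub_lt (a := b + 1) (b := a) (by omega) (by omega)]
  omega

end

section
variable {V : Type*} {G : SimpleGraph V}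

theorem nonempty_chair_embedding_of_adj {a b c d e : V}
    (hab : G.Adj a b) (hac : G.Adj a c) (had : G.Adj a d) (hde : G.Adj d e)
    (hbc : ¬G.Adj b c) (hbd : ¬G.Adj b d) (hbe : ¬G.Adj b e)
    (hcd : ¬G.Adj c d) (hce : ¬G.Adj c e) (hae : ¬G.Adj a e) (hne : b ≠ c) :
    Nonempty (chair ↪g G) := by
  have := hab.ne; have := hac.ne; have := had.ne; have := hde.ne
  have : b ≠ d := by rintro rfl; exact hbe hde
  have : c ≠ d := by rintro rfl; exact hce hde
  have : b ≠ e := by rintro rfl; exact hae hab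
  have : c ≠ e := by rintro rfl; exact hae hac
  have : a ≠ e := by rintro rfl; exact hbe hab.symm
  refine ⟨⟨⟨![a, b, c, d, e], fun x y h => ?_⟩, fun {x y} => ?_⟩⟩
  · fin_cases x <;> fin_cases y <;> simp_all [eq_comm]
  · change G.Adj (![a, b, c, d, e] x) (![a, b, c, d, e] y) ↔ _
    fin_cases x <;> fin_cases y <;> simp_all [chair, G.adj_comm]

theorem nonempty_bull_embedding_of_adj {a b c d e : V}
    (hab : G.Adj a b) (hbc : G.Adj b c) (hcd : G.Adj c d) (hde : G.Adj d e) (hbd : G.Adj b d)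
    (hac : ¬G.Adj a c) (had : ¬G.Adj a d) (hae : ¬G.Adj a e)
    (hbe : ¬G.Adj b e) (hce : ¬G.Adj c e) :
    Nonempty (bull ↪g G) := by
  have := hab.ne; have := hbc.ne; have := hcd.ne; have := hde.ne; have := hbd.ne
  have : a ≠ c := by rintro rfl; exact had hcd
  have : a ≠ d := by rintro rfl; exact hac hcd.symm
  have : a ≠ e := by rintro rfl; exact had hde.symm
  have : b ≠ e := by rintro rfl; exact hce hbc.symm
  have : c ≠ e := by rintro rfl; exact hbe hbc
  refine ⟨⟨⟨![a, b, c, d, e], fun x y h => ?_⟩, fun {x y} => ?_⟩⟩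
  · fin_cases x <;> fin_cases y <;> simp_all [eq_comm]
  · change G.Adj (![a, b, c, d, e] x) (![a, b, c, d, e] y) ↔ _
    fin_cases x <;> fin_cases y <;> simp_all [bull, G.adj_comm]

end

namespace SimpleGraph.Embedding
open Fin.CommRing
variable {V : Type*} {G : SimpleGraph V} {p : ℕ} [NeZero p] (φ : cycleG p ↪g G) {w : V}

theorem cycleG_adj_iff {a b : ℤ} (h₁ : a - b ≤ p - 2) (h₂ : b - a ≤ p - 2) :
    G.Adj (φ a) (φ b) ↔ a = b + 1 ∨ b = a + 1 :=
  φ.map_adj_iff.trans (cycleG_adj_intCast_iff h₁ h₂)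

theorem adj_add_two_of_isolated (hchair : ¬Nonempty (chair ↪g G)) (hw : ∀ i, w ≠ φ i)
    (hp : 5 ≤ p) {k : ℤ} (h : G.Adj w (φ k)) (hl : ¬G.Adj w (φ ↑(k - 1)))
    (hr : ¬G.Adj w (φ ↑(k + 1))) : G.Adj w (φ ↑(k + 2)) := by
  by_contra h₂
  refine hchair (nonempty_chair_embedding_of_adj h.symm ?_ ?_ ?_ hl hr h₂ ?_ ?_ ?_ (hw _)) <;>
    rw [φ.cycleG_adj_iff] <;> omega

theorem not_adj_of_isolated (hchair : ¬Nonempty (chair ↪g G)) {k t : ℤ} (h : G.Adj w (φ k))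
    (hl : ¬G.Adj w (φ ↑(k - 1))) (hr : ¬G.Adj w (φ ↑(k + 1)))
    (ht₁ : 3 ≤ (t - k).natAbs) (ht₂ : (t - k).natAbs + 3 ≤ p) : ¬G.Adj w (φ t) := by
  intro ht
  have hne : ((k - 1 : ℤ) : Fin p) ≠ ((k + 1 : ℤ) : Fin p) := by
    rw [Ne, Fin.intCast_eq_intCast_iff_of_sub_lt] <;> omega
  refine hchair (nonempty_chair_embedding_of_adj ?_ ?_ h.symm ht ?_ (fun h => hl h.symm) ?_
    (fun h => hr h.symm) ?_ ?_ (φ.injective.ne hne)) <;>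
    rw [φ.cycleG_adj_iff] <;> omega

theorem false_of_isolated (hchair : ¬Nonempty (chair ↪g G)) (hw : ∀ i, w ≠ φ i)
    (hp : 7 ≤ p) {k : ℤ} (h : G.Adj w (φ k)) (hl : ¬G.Adj w (φ ↑(k - 1)))
    (hr : ¬G.Adj w (φ ↑(k + 1))) : False := by
  have h₂ := φ.adj_add_two_of_isolated hchair hw (by omega) h hl hr
  have h₃ : ¬G.Adj w (φ ↑(k + 2 + 1)) :=
    φ.not_adj_of_isolated hchair h hl hr (by omega) (by omega)
  have h₄ := φ.adj_add_two_of_isolated hchair hw (by omega) h₂ (by convert hr using 4; ring) h₃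
  exact φ.not_adj_of_isolated hchair h hl hr (by omega) (by omega) h₄

theorem adj_sub_two_of_adj_sub_one (hbull : ¬Nonempty (bull ↪g G)) (hp : 5 ≤ p) {k : ℤ}
    (h : G.Adj w (φ k)) (hl : G.Adj w (φ ↑(k - 1))) (hr : ¬G.Adj w (φ ↑(k + 1))) :
    G.Adj w (φ ↑(k - 2)) := by
  by_contra h₂
  refine hbull (nonempty_bull_embedding_of_adj ?_ hl.symm h ?_ ?_ (fun h => h₂ h.symm)
    ?_ ?_ ?_ hr) <;>
    rw [φ.cycleG_adj_iff] <;> omega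

theorem not_adj_of_adj_sub_one (hbull : ¬Nonempty (bull ↪g G)) {k t : ℤ}
    (h : G.Adj w (φ k)) (hl : G.Adj w (φ ↑(k - 1))) (hr : ¬G.Adj w (φ ↑(k + 1)))
    (ht₁ : k + 3 ≤ t) (ht₂ : t + 3 ≤ k + p) : ¬G.Adj w (φ t) := by
  intro ht
  refine hbull (nonempty_bull_embedding_of_adj ht.symm hl ?_ ?_ h ?_ ?_ ?_ hr ?_) <;>
    rw [φ.cycleG_adj_iff] <;> omega

end SimpleGraph.Embedding

theorem neighbors_on_odd_cycle_general {V : Type*} (G : SimpleGraph V)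
    (hbull : ¬ Nonempty (bull ↪g G)) (hchair : ¬ Nonempty (chair ↪g G))
    (p : ℕ) [NeZero p] (hp : 7 ≤ p)
    (v : Fin p → V) (hvinj : Function.Injective v)
    (hv : ∀ i j : Fin p, G.Adj (v i) (v j) ↔ (cycleG p).Adj i j)
    (w : V) (hw : ∀ i, w ≠ v i) (hadj : ∃ i, G.Adj w (v i)) :
    (∀ i : Fin p, G.Adj w (v i)) ∨
    (∃ i : Fin p, ∀ j : Fin p, G.Adj w (v j) ↔ (j = i - 1 ∨ j = i ∨ j = i + 1)) := by
  open Fin.CommRing in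
  let φ : cycleG p ↪g G := ⟨⟨v, hvinj⟩, hv _ _⟩
  by_cases hall : ∀ i, G.Adj w (v i)
  · exact Or.inl hall
  push Not at hall
  obtain ⟨k, hk, hk₁⟩ :=
    Fin.exists_intCast_and_not_intCast_add_one (P := fun j => G.Adj w (φ j)) hadj hall
  have hk₂ : G.Adj w (φ ↑(k - 1)) := by
    by_contra h
    exact φ.false_of_isolated hchair hw hp hk h hk₁
  have hk₃ := φ.adj_sub_two_of_adj_sub_one hbull (by omega) hk hk₂ hk₁
  have hfar (t : ℤ) : k + 3 ≤ t → t + 3 ≤ k + p → ¬G.Adj w (φ t) :=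
    φ.not_adj_of_adj_sub_one hbull hk hk₂ hk₁
  have hk₄ : ¬G.Adj w (φ ↑(k + 2)) := fun h =>
    φ.not_adj_of_isolated hchair (t := k - 1) h (by convert hk₁ using 4; ring)
      (hfar _ (by omega) (by omega)) (by omega) (by omega) hk₂
  refine Or.inr (Fin.exists_forall_iff_eq_sub_one_or_eq_or_eq_add_one (by omega) hk₃ hk₂ hk
    fun t ht₁ ht₂ => ?_)
  obtain rfl | rfl | ht₃ : t = k + 1 ∨ t = k + 2 ∨ k + 3 ≤ t := by omega
  exacts [hk₁, hk₄, hfar t ht₃ (by omega)]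

theorem neighbors_on_odd_cycle {V : Type*} (G : SimpleGraph V)
    (hbull : ¬ Nonempty (bull ↪g G)) (hchair : ¬ Nonempty (chair ↪g G))
    (p : ℕ) [NeZero p] (hodd : Odd p) (hp : 7 ≤ p)
    (v : Fin p → V) (hvinj : Function.Injective v)
    (hv : ∀ i j : Fin p, G.Adj (v i) (v j) ↔ (cycleG p).Adj i j)
    (w : V) (hw : ∀ i, w ≠ v i) (hadj : ∃ i, G.Adj w (v i)) :
    (∀ i : Fin p, G.Adj w (v i)) ∨
    (∃ i : Fin p, ∀ j : Fin p, G.Adj w (v j) ↔ (j = i - 1 ∨ j = i ∨ j = i + 1)) :=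
  neighbors_on_odd_cycle_general G hbull hchair p hp v hvinj hv w hw hadj
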